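/- arXiv:cs/0207042 — 3 statements merged into one kernel-verified Lean document; each statement's English description precedes it below -/
import Mathlib

section
/- The preference relation > on answer sets of an LPOD P (S₁ > S₂ iff there exists i such that S₂ⁱ(P) ⊊ S₁ⁱ(P) and S₁ʲ(P) = S₂ʲ(P) for all j < i) is transitive. -/
namespace LPOD

/-- An LPOD rule `C₁ × … × Cₙ ← A₁,…,Aₘ, not B₁,…, not Bₖ`:
`head` is the ordered list of choices, `pos` the positive body literals,
`neg` the default-negated body literals. -/
structure Rule (L : Type) where
  head : List L
  pos  : List L
  neg  : List L

/-- `S` satisfies the body of `r`. -/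
def bodySat {L : Type} (S : Set L) (r : Rule L) : Prop :=
  (∀ a ∈ r.pos, a ∈ S) ∧ (∀ b ∈ r.neg, b ∉ S)

/-- `S` satisfies rule `r` to degree `d` (1-based): degree 1 if the body fails,
otherwise the minimal index of a head choice belonging to `S`. -/
def satDeg {L : Type} (S : Set L) (r : Rule L) (d : ℕ) : Prop :=
  (¬ bodySat S r ∧ d = 1) ∨
  (bodySat S r ∧ 1 ≤ d ∧
    (∃ c, r.head[d - 1]? = some c ∧ c ∈ S) ∧
    (∀ i < d - 1, ∀ c, r.head[i]? = some c → c ∉ S))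

/-- The `k`-th option (1-based) of rule `r`:
`Cₖ ← body, not C₁, …, not C_{k−1}`. -/
def ruleOption {L : Type} (r : Rule L) (k : ℕ) : Rule L :=
  { head := (r.head[k - 1]?).toList
    pos  := r.pos
    neg  := r.neg ++ r.head.take (k - 1) }

/-- `P'` is a split program of `P`: each rule of `P` is replaced by one of its options. -/
def isSplit {L : Type} (P P' : List (Rule L)) : Prop :=
  P'.length = P.length ∧
  ∀ i r, P[(i : ℕ)]? = some r →
    ∃ k, 1 ≤ k ∧ k ≤ r.head.length ∧ P'[i]? = some (ruleOption r k)

/-- `T` is closed under the `S`-reduct of `P` (Gelfond–Lifschitz). -/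
def reductClosed {L : Type} (P : List (Rule L)) (S T : Set L) : Prop :=
  ∀ r ∈ P, (∀ b ∈ r.neg, b ∉ S) → (∀ a ∈ r.pos, a ∈ T) → ∃ c ∈ r.head, c ∈ T

/-- Literals are `(true, a)` (the atom `a`) and `(false, a)` (its strong negation `¬a`). -/
def consistent {A : Type} (S : Set (Bool × A)) : Prop :=
  ¬ ∃ a, (true, a) ∈ S ∧ (false, a) ∈ S

/-- Logically closed: consistent, or the set of all literals. -/
def logClosed {A : Type} (S : Set (Bool × A)) : Prop :=
  consistent S ∨ S = Set.univ

/-- `S` is an answer set of the ordered-disjunction-free program `P`: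
a minimal logically closed set closed under the `S`-reduct of `P`. -/
def answerSet {A : Type} (P : List (Rule (Bool × A))) (S : Set (Bool × A)) : Prop :=
  logClosed S ∧ reductClosed P S S ∧
  ∀ T, T ⊆ S → logClosed T → reductClosed P S T → T = S

/-- `S` is an answer set of the LPOD `P`: a consistent answer set of some split program. -/
def lpodAS {A : Type} (P : List (Rule (Bool × A))) (S : Set (Bool × A)) : Prop :=
  ∃ P', isSplit P P' ∧ answerSet P' S ∧ consistent S

/-- `Sⁱ(P)`: the rules of `P` satisfied by `S` to degree `i`. -/
def degSet {L : Type} (S : Set L) (P : List (Rule L)) (i : ℕ) : Set (Rule L) :=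
  {r | r ∈ P ∧ satDeg S r i}

/-- `S₁ > S₂`: for some degree `i`, `S₂ⁱ(P) ⊊ S₁ⁱ(P)` and `S₁ʲ(P) = S₂ʲ(P)` for all `j < i`. -/
def pref {L : Type} (P : List (Rule L)) (S₁ S₂ : Set L) : Prop :=
  ∃ i, 1 ≤ i ∧ degSet S₂ P i ⊂ degSet S₁ P i ∧
    ∀ j < i, degSet S₁ P j = degSet S₂ P j

/-- Preferred answer sets: answer sets not beaten by any answer set. -/
def preferredAS {A : Type} (P : List (Rule (Bool × A))) (S : Set (Bool × A)) : Prop :=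
  lpodAS P S ∧ ¬ ∃ S', lpodAS P S' ∧ pref P S' S

theorem pref.trans {L : Type} {P : List (Rule L)} {S₁ S₂ S₃ : Set L}
    (h₁₂ : pref P S₁ S₂) (h₂₃ : pref P S₂ S₃) : pref P S₁ S₃ := by
  obtain ⟨i, hi, hlt₁₂, heq₁₂⟩ := h₁₂
  obtain ⟨k, hk, hlt₂₃, heq₂₃⟩ := h₂₃
  rcases lt_trichotomy i k with hik | rfl | hki
  · exact ⟨i, hi, heq₂₃ i hik ▸ hlt₁₂, fun j hj => (heq₁₂ j hj).trans (heq₂₃ j (hj.trans hik))⟩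
  · exact ⟨i, hi, hlt₂₃.trans hlt₁₂, fun j hj => (heq₁₂ j hj).trans (heq₂₃ j hj)⟩
  · exact ⟨k, hk, heq₁₂ k hki ▸ hlt₂₃, fun j hj => (heq₁₂ j (hj.trans hki)).trans (heq₂₃ j hj)⟩

end LPOD

open LPOD

theorem pref_trans_general {A : Type} (P : List (Rule (Bool × A)))
    (S₁ S₂ S₃ : Set (Bool × A))
    (h12 : pref P S₁ S₂) (h23 : pref P S₂ S₃) : pref P S₁ S₃ :=
  h12.trans h23

/-- the preference relation on answer sets of an LPOD is transitive
(under the assumption that each answer set satisfies every rule to exactly one degree). -/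
theorem pref_trans {A : Type} (P : List (Rule (Bool × A)))
    (S₁ S₂ S₃ : Set (Bool × A))
    (h₁ : lpodAS P S₁) (h₂ : lpodAS P S₂) (h₃ : lpodAS P S₃)
    (hpart : ∀ S : Set (Bool × A), (S = S₁ ∨ S = S₂ ∨ S = S₃) →
      ∀ r ∈ P, ∃! d : ℕ, satDeg S r d)
    (h12 : pref P S₁ S₂) (h23 : pref P S₂ S₃) : pref P S₁ S₃ :=
  pref_trans_general P S₁ S₂ S₃ h12 h23
end

section
/- There exists an LPOD P whose preferred answer sets are not subset-minimal: concretely, the program with rules a × b; c × b ← a; ¬c has exactly the preferred answer sets S₁ = {b, ¬c} and S₂ = {a, b, ¬c}, and S₁ ⊊ S₂. -/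
open LPOD

namespace Stmt5

/-- atoms: a = 0, b = 1, c = 2 -/
def a : Bool × Fin 3 := (true, 0)
def b : Bool × Fin 3 := (true, 1)
def c : Bool × Fin 3 := (true, 2)
def nc : Bool × Fin 3 := (false, 2)

/-- the program  a × b ;  c × b ← a ;  ¬c -/
def P : List (Rule (Bool × Fin 3)) :=
  [⟨[a, b], [], []⟩, ⟨[c, b], [a], []⟩, ⟨[nc], [], []⟩]

end Stmt5

/-! An answer set of an LPOD satisfies every rule whose body it satisfies (either an earlier
choice already holds, or the chosen option fires), and it consists of head literals only.
Here `¬c` is a fact, so `c` is excluded; then `a × b` and `c × b ← a` force `b`, and the answer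
sets are `{b, ¬c}` and `{a, b, ¬c}`. Neither is preferred to the other, since each satisfies a
rule to degree 1 that the other does not: `{a, b, ¬c}` the rule `a × b`, and `{b, ¬c}` the rule
`c × b ← a`, whose body it falsifies. -/

namespace LPOD

variable {L : Type}

theorem isSplit_nil : isSplit ([] : List (Rule L)) [] :=
  ⟨rfl, by simp⟩

theorem isSplit.cons {r r' : Rule L} {P P' : List (Rule L)}
    (hr : ∃ k, 1 ≤ k ∧ k ≤ r.head.length ∧ r' = ruleOption r k) (h : isSplit P P') :
    isSplit (r :: P) (r' :: P') := by
  refine ⟨by simp [h.1], fun i r₀ hi => ?_⟩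
  cases i with
  | zero =>
    obtain ⟨k, hk₁, hk₂, rfl⟩ := hr
    obtain rfl : r = r₀ := by simpa using hi
    exact ⟨k, hk₁, hk₂, rfl⟩
  | succ i => simpa using h.2 i r₀ (by simpa using hi)

theorem isSplit.exists_ruleOption_mem {P P' : List (Rule L)} (h : isSplit P P') {r : Rule L}
    (hr : r ∈ P) : ∃ k, ruleOption r k ∈ P' := by
  obtain ⟨i, hi⟩ := List.mem_iff_getElem?.1 hr
  obtain ⟨k, -, -, hk⟩ := h.2 i r hi
  exact ⟨k, List.mem_of_getElem? hk⟩

theorem isSplit.exists_eq_ruleOption {P P' : List (Rule L)} (h : isSplit P P') {r' : Rule L}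
    (hr' : r' ∈ P') : ∃ r ∈ P, ∃ k, r' = ruleOption r k := by
  obtain ⟨i, hi⟩ := List.mem_iff_getElem?.1 hr'
  have hiP : i < P.length := h.1 ▸ (List.getElem?_eq_some_iff.1 hi).1
  obtain ⟨k, -, -, hk⟩ := h.2 i P[i] (List.getElem?_eq_getElem hiP)
  exact ⟨P[i], List.getElem_mem hiP, k, Option.some.inj (hi.symm.trans hk)⟩

theorem mem_head_of_mem_ruleOption_head {r : Rule L} {k : ℕ} {x : L}
    (hx : x ∈ (ruleOption r k).head) : x ∈ r.head := by
  exact List.mem_of_getElem? (Option.mem_toList.1 hx)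

variable {A : Type}

theorem consistent.mono {S T : Set (Bool × A)} (hS : consistent S) (hTS : T ⊆ S) :
    consistent T :=
  fun ⟨x, hx, hx'⟩ => hS ⟨x, hTS hx, hTS hx'⟩

theorem lpodAS.consistent {P : List (Rule (Bool × A))} {S : Set (Bool × A)}
    (h : lpodAS P S) : consistent S :=
  let ⟨_, _, _, hS⟩ := h
  hS

theorem answerSet_of_forall_reductClosed {P : List (Rule (Bool × A))} {S : Set (Bool × A)}
    (hS : consistent S) (hclosed : reductClosed P S S)
    (hleast : ∀ T, reductClosed P S T → S ⊆ T) : answerSet P S :=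
  ⟨Or.inl hS, hclosed, fun T hTS _ hT => hTS.antisymm (hleast T hT)⟩

theorem lpodAS.exists_mem_head {P : List (Rule (Bool × A))} {S : Set (Bool × A)}
    (h : lpodAS P S) {r : Rule (Bool × A)} (hr : r ∈ P) (hbody : bodySat S r) :
    ∃ x ∈ r.head, x ∈ S := by
  obtain ⟨P', hsplit, ⟨-, hclosed, -⟩, -⟩ := h
  obtain ⟨k, hk⟩ := hsplit.exists_ruleOption_mem hr
  by_cases hearlier : ∃ x ∈ r.head.take (k - 1), x ∈ S
  · obtain ⟨x, hx, hxS⟩ := hearlier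
    exact ⟨x, List.mem_of_mem_take hx, hxS⟩
  · simp only [not_exists, not_and] at hearlier
    have hneg : ∀ y ∈ (ruleOption r k).neg, y ∉ S := by
      intro y hy
      rcases List.mem_append.1 hy with hy | hy
      exacts [hbody.2 y hy, hearlier y hy]
    obtain ⟨x, hx, hxS⟩ := hclosed _ hk hneg hbody.1
    exact ⟨x, mem_head_of_mem_ruleOption_head hx, hxS⟩

/-- Otherwise removing the literal would leave a smaller reduct-closed set. -/
theorem lpodAS.exists_mem_rule_head {P : List (Rule (Bool × A))} {S : Set (Bool × A)}
    (h : lpodAS P S) {x : Bool × A} (hx : x ∈ S) : ∃ r ∈ P, x ∈ r.head := by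
  obtain ⟨P', hsplit, ⟨-, hclosed, hmin⟩, hS⟩ := h
  by_contra! hhead
  have hclosed' : reductClosed P' S (S \ {x}) := by
    intro r' hr' hneg hpos
    obtain ⟨y, hy, hyS⟩ := hclosed r' hr' hneg fun z hz => (hpos z hz).1
    obtain ⟨r, hr, k, rfl⟩ := hsplit.exists_eq_ruleOption hr'
    refine ⟨y, hy, hyS, ?_⟩
    rintro rfl
    exact hhead r hr (mem_head_of_mem_ruleOption_head hy)
  have := hmin _ Set.sdiff_subset (Or.inl (hS.mono Set.sdiff_subset)) hclosed'
  exact (this ▸ hx).2 rfl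

theorem satDeg_one_iff {S : Set L} {r : Rule L} :
    satDeg S r 1 ↔ (bodySat S r → ∃ x, r.head[0]? = some x ∧ x ∈ S) := by
  by_cases hbody : bodySat S r <;> simp [satDeg, hbody]

theorem pref_irrefl (P : List (Rule L)) (S : Set L) : ¬ pref P S S :=
  fun ⟨_, _, hlt, _⟩ => hlt.ne rfl

theorem not_pref_of_mem_degSet_one {P : List (Rule L)} {S S' : Set L} {r : Rule L}
    (hS : r ∈ degSet S P 1) (hS' : r ∉ degSet S' P 1) : ¬ pref P S' S := by
  rintro ⟨i, hi, hlt, heq⟩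
  rcases hi.eq_or_lt with rfl | hi
  · exact hS' (hlt.1 hS)
  · exact hS' (heq 1 hi ▸ hS)

end LPOD

namespace Stmt5

theorem consistent_abnc : consistent {a, b, nc} := by
  rintro ⟨x, hx, hx'⟩
  simp_all [a, b, nc]

theorem lpodAS_P_bnc : lpodAS P {b, nc} := by
  have hS : consistent {b, nc} := consistent_abnc.mono (Set.subset_insert _ _)
  refine ⟨[⟨[b], [], [a]⟩, ⟨[c], [a], []⟩, ⟨[nc], [], []⟩], ?_, ?_, hS⟩
  · exact .cons ⟨2, by decide, by decide, rfl⟩ <| .cons ⟨1, by decide, by decide, rfl⟩ <|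
      .cons ⟨1, by decide, by decide, rfl⟩ isSplit_nil
  · refine answerSet_of_forall_reductClosed hS ?_ fun T hT => ?_
    · simp [reductClosed, a, b, c, nc]
    · simp_all [reductClosed, Set.insert_subset_iff, a, b, c, nc]

theorem lpodAS_P_abnc : lpodAS P {a, b, nc} := by
  refine ⟨[⟨[a], [], []⟩, ⟨[b], [a], [c]⟩, ⟨[nc], [], []⟩], ?_, ?_, consistent_abnc⟩
  · exact .cons ⟨1, by decide, by decide, rfl⟩ <| .cons ⟨2, by decide, by decide, rfl⟩ <|
      .cons ⟨1, by decide, by decide, rfl⟩ isSplit_nil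
  · refine answerSet_of_forall_reductClosed consistent_abnc ?_ fun T hT => ?_
    · simp [reductClosed, a, b, c, nc]
    · simp_all [reductClosed, Set.insert_subset_iff, a, b, c, nc]

theorem eq_of_lpodAS_P {S : Set (Bool × Fin 3)} (h : lpodAS P S) :
    S = {b, nc} ∨ S = {a, b, nc} := by
  have hnc : nc ∈ S := by
    simpa [bodySat] using h.exists_mem_head (r := ⟨[nc], [], []⟩) (by simp [P])
  have hc : c ∉ S := fun hc => h.consistent ⟨2, hc, hnc⟩
  have hb : b ∈ S := by
    rcases (by simpa [bodySat] using h.exists_mem_head (r := ⟨[a, b], [], []⟩) (by simp [P]))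
      with ha | hb
    · simpa [bodySat, hc] using
        h.exists_mem_head (r := ⟨[c, b], [a], []⟩) (by simp [P]) (by simp [bodySat, ha])
    · exact hb
  have hsub : S ⊆ {a, b, nc} := by
    intro x hx
    obtain ⟨r, hr, hxr⟩ := h.exists_mem_rule_head hx
    obtain rfl | rfl | rfl | rfl : x = a ∨ x = b ∨ x = c ∨ x = nc := by
      simp only [P, List.mem_cons, List.not_mem_nil, or_false] at hr
      rcases hr with rfl | rfl | rfl <;>
        simp only [List.mem_cons, List.not_mem_nil, or_false] at hxr <;> tauto
    exacts [by simp, by simp, absurd hx hc, by simp]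
  by_cases ha : a ∈ S
  · exact .inr (hsub.antisymm (by simp [Set.insert_subset_iff, ha, hb, hnc]))
  · refine .inl ((Set.subset_insert_iff_of_notMem ha).1 hsub |>.antisymm ?_)
    simp [Set.insert_subset_iff, hb, hnc]

theorem lpodAS_P_iff (S : Set (Bool × Fin 3)) :
    lpodAS P S ↔ S = {b, nc} ∨ S = {a, b, nc} :=
  ⟨eq_of_lpodAS_P, by rintro (rfl | rfl); exacts [lpodAS_P_bnc, lpodAS_P_abnc]⟩

theorem not_pref_abnc_bnc : ¬ pref P {a, b, nc} {b, nc} :=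
  not_pref_of_mem_degSet_one (r := ⟨[c, b], [a], []⟩)
    (by simp [degSet, satDeg_one_iff, bodySat, P, a, b, c, nc])
    (by simp [degSet, satDeg_one_iff, bodySat, P, a, b, c, nc])

theorem not_pref_bnc_abnc : ¬ pref P {b, nc} {a, b, nc} :=
  not_pref_of_mem_degSet_one (r := ⟨[a, b], [], []⟩)
    (by simp [degSet, satDeg_one_iff, bodySat, P, a, b, c, nc])
    (by simp [degSet, satDeg_one_iff, bodySat, P, a, b, c, nc])

/-- preferred answer sets of an LPOD need not be subset-minimal:
this program has exactly the preferred answer sets {b,¬c} and {a,b,¬c}, and the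
first is a proper subset of the second. -/
theorem preferred_not_minimal :
    (∀ S : Set (Bool × Fin 3),
      preferredAS P S ↔ (S = {b, nc} ∨ S = {a, b, nc})) ∧
    ({b, nc} : Set (Bool × Fin 3)) ⊂ {a, b, nc} := by
  refine ⟨fun S => ⟨fun h => (lpodAS_P_iff S).1 h.1,
    fun hS => ⟨(lpodAS_P_iff S).2 hS, ?_⟩⟩, Set.ssubset_insert (by simp [a, b, nc])⟩
  rintro ⟨S', hS', hpref⟩
  rcases hS with rfl | rfl <;> rcases (lpodAS_P_iff S').1 hS' with rfl | rfl
  exacts [pref_irrefl _ _ hpref, not_pref_abnc_bnc hpref, not_pref_bnc_abnc hpref,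
    pref_irrefl _ _ hpref]

end Stmt5
end

section
/- Answer sets of extended logic programs (without disjunction) under the Gelfond–Lifschitz semantics are subset-minimal: if S₁ and S₂ are both answer sets of the same extended logic program P and S₁ ⊆ S₂, then S₁ = S₂. -/
open LPOD

namespace LPOD

theorem reductClosed.mono_left {L : Type} {P : List (Rule L)} {S S' T : Set L}
    (hS : S ⊆ S') (h : reductClosed P S T) : reductClosed P S' T :=
  fun r hr hneg hpos => h r hr (fun b hb hbS => hneg b hb (hS hbS)) hpos

end LPOD

theorem answer_sets_minimal_general {A : Type} (P : List (Rule (Bool × A)))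
    (S₁ S₂ : Set (Bool × A)) (h₁ : answerSet P S₁) (h₂ : answerSet P S₂)
    (hsub : S₁ ⊆ S₂) : S₁ = S₂ :=
  h₂.2.2 S₁ hsub h₁.1 (h₁.2.1.mono_left hsub)

/-- answer sets of extended logic programs (every rule has a single
head literal) are subset-minimal. -/
theorem answer_sets_minimal {A : Type} (P : List (Rule (Bool × A)))
    (hsingle : ∀ r ∈ P, r.head.length = 1)
    (S₁ S₂ : Set (Bool × A)) (h₁ : answerSet P S₁) (h₂ : answerSet P S₂)
    (hsub : S₁ ⊆ S₂) : S₁ = S₂ :=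
  answer_sets_minimal_general P S₁ S₂ h₁ h₂ hsub
end
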